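/- arXiv:2108.04563 — 5 statements merged into one kernel-verified Lean document; each statement's English description precedes it below -/
import Mathlib

section
/- Let G be a simple graph on a finite vertex type V with a weight function assigning a strictly positive real weight to each edge, let U be a finset of vertices, and let W be a finset of edges with ∂W = U whose total weight is minimal among all finsets of edges with boundary U. Then the spanning subgraph of G with edge set W is acyclic (contains no cycle). -/
/-!
Every vertex lies on an even number of edges of a cycle, so deleting the edges of a cycle
from `W` keeps its boundary while strictly lowering its weight.
-/

/-- The boundary of a finset `W` of edges (elements of `Sym2 V`):
the finset of vertices incident to an odd number of edges in `W`. -/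
def graphBoundary {V : Type*} [Fintype V] [DecidableEq V]
    (W : Finset (Sym2 V)) : Finset V :=
  Finset.univ.filter fun v => Odd ((W.filter fun e => v ∈ e).card)

open Finset

theorem graphBoundary_sdiff_of_even_card_filter_mem {V : Type*} [Fintype V] [DecidableEq V]
    {W C : Finset (Sym2 V)} (hCW : C ⊆ W) (hC : ∀ x : V, Even #(C.filter (x ∈ ·))) :
    graphBoundary (W \ C) = graphBoundary W := by
  refine filter_congr fun x _ => ?_
  have hfilter : (W \ C).filter (x ∈ ·) = W.filter (x ∈ ·) \ C.filter (x ∈ ·) := by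
    ext e
    simp only [mem_filter, mem_sdiff]
    tauto
  have hsub : C.filter (x ∈ ·) ⊆ W.filter (x ∈ ·) := filter_subset_filter _ hCW
  rw [hfilter, card_sdiff_of_subset hsub, Nat.odd_sub (card_le_card hsub)]
  simp only [hC x, iff_true]

namespace SimpleGraph.Walk

variable {V : Type*} {G : SimpleGraph V}

theorem IsTrail.even_card_filter_mem_edges [DecidableEq V] {u : V} {p : G.Walk u u}
    (hp : p.IsTrail) (x : V) : Even #(p.edges.toFinset.filter (x ∈ ·)) := by
  have hcount : Even (p.edges.countP (x ∈ ·)) :=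
    (hp.even_countP_edges_iff x).mpr fun h => absurd rfl h
  have hfilter : p.edges.toFinset.filter (x ∈ ·) = (p.edges.filter (x ∈ ·)).toFinset := by
    simp [List.toFinset_filter]
  rwa [hfilter, List.toFinset_card_of_nodup (hp.edges_nodup.filter _),
    ← List.countP_eq_length_filter]

theorem IsCycle.edges_toFinset_nonempty [DecidableEq V] {u : V} {p : G.Walk u u}
    (hp : p.IsCycle) : p.edges.toFinset.Nonempty :=
  List.toFinset_nonempty_iff _ |>.mpr <| edges_eq_nil.not.mpr hp.not_nil

theorem edges_toFinset_subset_of_fromEdgeSet [DecidableEq V] {W : Finset (Sym2 V)} {u v : V}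
    (p : (fromEdgeSet (↑W : Set (Sym2 V))).Walk u v) : p.edges.toFinset ⊆ W := fun e he => by
  have := p.edges_subset_edgeSet (List.mem_toFinset.mp he)
  rw [edgeSet_fromEdgeSet] at this
  exact this.1

end SimpleGraph.Walk

/-- Let `G` be a simple graph with strictly positive edge
weights, `U` a finset of vertices, and `W` a finset of edges of `G` with
`∂W = U` of minimal total weight among all finsets of edges of `G` with
boundary `U`.  Then the spanning subgraph of `G` with edge set `W` is acyclic. -/
theorem stmt_5 {V : Type*} [Fintype V] [DecidableEq V] (G : SimpleGraph V)
    (w : Sym2 V → ℝ) (hw : ∀ e ∈ G.edgeSet, 0 < w e)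
    (U : Finset V) (W : Finset (Sym2 V)) (hWE : ∀ e ∈ W, e ∈ G.edgeSet)
    (hbd : graphBoundary W = U)
    (hmin : ∀ W' : Finset (Sym2 V), (∀ e ∈ W', e ∈ G.edgeSet) →
      graphBoundary W' = U → ∑ e ∈ W, w e ≤ ∑ e ∈ W', w e) :
    (SimpleGraph.fromEdgeSet (↑W : Set (Sym2 V))).IsAcyclic := by
  intro v p hp
  set C := p.edges.toFinset
  have hCW : C ⊆ W := p.edges_toFinset_subset_of_fromEdgeSet
  have hbd' : graphBoundary (W \ C) = U :=
    hbd ▸ graphBoundary_sdiff_of_even_card_filter_mem hCW hp.isTrail.even_card_filter_mem_edges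
  have hle := hmin (W \ C) (fun e he => hWE e (mem_sdiff.mp he).1) hbd'
  have hsplit : ∑ e ∈ W \ C, w e + ∑ e ∈ C, w e = ∑ e ∈ W, w e := sum_sdiff hCW
  have hpos : 0 < ∑ e ∈ C, w e :=
    sum_pos (fun e he => hw e (hWE e (hCW he))) hp.edges_toFinset_nonempty
  linarith
end

section
/- Let G be a simple graph on a finite vertex type V, let W be a finset of edges such that the spanning subgraph with edge set W is acyclic, and suppose ∂W = U with v ∈ U. Then there exists a vertex u ∈ U with u ≠ v and a path from v to u in G all of whose edges lie in W. -/
namespace SimpleGraph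

variable {V : Type*} {G : SimpleGraph V}

section Component

variable [Fintype V] (C : G.ConnectedComponent) [DecidableRel C.toSimpleGraph.spanningCoe.Adj]
  {x : V}

theorem ConnectedComponent.degree_spanningCoe_toSimpleGraph_of_mem [DecidableRel G.Adj]
    (hx : x ∈ C.supp) :
    C.toSimpleGraph.spanningCoe.degree x = G.degree x := by
  simp only [← card_neighborFinset_eq_degree]
  congr 1
  ext y
  simp [C.adj_spanningCoe_toSimpleGraph, hx]

theorem ConnectedComponent.degree_spanningCoe_toSimpleGraph_of_notMem (hx : x ∉ C.supp) :
    C.toSimpleGraph.spanningCoe.degree x = 0 := by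
  simp [← card_neighborFinset_eq_degree, Finset.eq_empty_iff_forall_notMem,
    C.adj_spanningCoe_toSimpleGraph, hx]

end Component

theorem exists_reachable_ne_odd_degree_of_odd_degree [Fintype V] [DecidableRel G.Adj] {v : V}
    (hv : Odd (G.degree v)) : ∃ w, w ≠ v ∧ G.Reachable v w ∧ Odd (G.degree w) := by
  classical
  set C := G.connectedComponentMk v
  obtain ⟨w, hne, hw⟩ := C.toSimpleGraph.spanningCoe.exists_ne_odd_degree_of_exists_odd_degree v
    (by rwa [C.degree_spanningCoe_toSimpleGraph_of_mem rfl])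
  have hwC : w ∈ C.supp := by
    by_contra hwC
    simp [C.degree_spanningCoe_toSimpleGraph_of_notMem hwC] at hw
  rw [C.degree_spanningCoe_toSimpleGraph_of_mem hwC] at hw
  exact ⟨w, hne, (ConnectedComponent.exact hwC).symm, hw⟩

theorem degree_fromEdgeSet_eq_card_filter_mem [Fintype V] [DecidableEq V] {W : Finset (Sym2 V)}
    (hW : ∀ e ∈ W, ¬ e.IsDiag) (x : V) :
    (fromEdgeSet (W : Set (Sym2 V))).degree x = (W.filter fun e => x ∈ e).card := by
  rw [← card_incidenceFinset_eq_degree, incidenceFinset_eq_filter]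
  congr 1
  ext e
  simp only [Finset.mem_filter, mem_edgeFinset, edgeSet_fromEdgeSet, Set.mem_sdiff, Finset.mem_coe,
    Sym2.mem_diagSet]
  exact and_congr_left fun _ => ⟨And.left, fun he => ⟨he, hW e he⟩⟩

end SimpleGraph

open SimpleGraph in
theorem mem_graphBoundary_iff_odd_degree {V : Type*} [Fintype V] [DecidableEq V]
    {W : Finset (Sym2 V)} (hW : ∀ e ∈ W, ¬ e.IsDiag) (x : V) :
    x ∈ graphBoundary W ↔ Odd ((fromEdgeSet (W : Set (Sym2 V))).degree x) := by
  simp [graphBoundary, degree_fromEdgeSet_eq_card_filter_mem hW]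

theorem stmt_6_general {V : Type*} [Fintype V] [DecidableEq V] (G : SimpleGraph V)
    (W : Finset (Sym2 V)) (hWE : ∀ e ∈ W, e ∈ G.edgeSet)
    (U : Finset V) (hbd : graphBoundary W = U) (v : V) (hv : v ∈ U) :
    ∃ u ∈ U, u ≠ v ∧ ∃ p : G.Walk v u, p.IsPath ∧ ∀ e ∈ p.edges, e ∈ W := by
  subst hbd
  have hloopless : ∀ e ∈ W, ¬ e.IsDiag := fun e he => G.not_isDiag_of_mem_edgeSet (hWE e he)
  have hle : SimpleGraph.fromEdgeSet (W : Set (Sym2 V)) ≤ G :=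
    (SimpleGraph.fromEdgeSet_le G).2 fun e he => hWE e he.1
  obtain ⟨u, hne, ⟨p⟩, hu⟩ := SimpleGraph.exists_reachable_ne_odd_degree_of_odd_degree
    ((mem_graphBoundary_iff_odd_degree hloopless v).1 hv)
  have hpW : ∀ e ∈ p.toPath.1.edges, e ∈ W := fun e he =>
    (SimpleGraph.edgeSet_fromEdgeSet _ ▸ p.toPath.1.edges_subset_edgeSet he).1
  refine ⟨u, (mem_graphBoundary_iff_odd_degree hloopless u).2 hu, hne, p.toPath.1.mapLe hle,
    p.toPath.2.mapLe hle, ?_⟩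
  rwa [SimpleGraph.Walk.edges_mapLe_eq_edges]

/-- Let `W` be a finset of edges of a simple graph `G` such
that the spanning subgraph with edge set `W` is acyclic, and suppose
`∂W = U` with `v ∈ U`.  Then there is a vertex `u ∈ U` with `u ≠ v` and a
path from `v` to `u` in `G` all of whose edges lie in `W`. -/
theorem stmt_6 {V : Type*} [Fintype V] [DecidableEq V] (G : SimpleGraph V)
    (W : Finset (Sym2 V)) (hWE : ∀ e ∈ W, e ∈ G.edgeSet)
    (hacyc : (SimpleGraph.fromEdgeSet (↑W : Set (Sym2 V))).IsAcyclic)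
    (U : Finset V) (hbd : graphBoundary W = U) (v : V) (hv : v ∈ U) :
    ∃ u ∈ U, u ≠ v ∧ ∃ p : G.Walk v u, p.IsPath ∧ ∀ e ∈ p.edges, e ∈ W :=
  stmt_6_general G W hWE U hbd v hv
end

section
/- Let G be a simple graph on a finite vertex type V, let W be a finset of edges such that the spanning subgraph with edge set W is acyclic, and suppose ∂W = U with |U| = 2n. Then there exist n pairs of vertices (v₁,u₁),…,(vₙ,uₙ) whose union of endpoints is exactly U, and pairwise edge-disjoint trails t₁,…,tₙ in G, where tᵢ is a trail from vᵢ to uᵢ, such that the edge finsets of the tᵢ are pairwise disjoint and their union equals W. -/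
/-!
Add the edges of `W` one at a time, maintaining a decomposition of the current edge set into
edge-disjoint trails with distinct, pairwise disjoint ends. A new edge `vu` starts a new trail
if neither `v` nor `u` is an end, extends the trail ending at one of them, or joins the two trails
ending at `v` and at `u`; these are different trails, since otherwise `vu` would close a cycle.
A trail from `a` to `b ≠ a` meets every vertex other than `a`, `b` in an even number of edges, so
its boundary is `{a, b}`, and the boundary of an edge-disjoint union is the symmetric difference
of the boundaries: hence `∂W` is the disjoint union of the ends.
-/

open Finset SimpleGraph

lemma Finset.biUnion_univ_equivFin_symm {α β : Type*} [DecidableEq β] (s : Finset α)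
    (f : α → Finset β) : univ.biUnion (fun i => f (s.equivFin.symm i)) = s.biUnion f := by
  ext b
  simp only [mem_biUnion, mem_univ, true_and]
  exact ⟨fun ⟨i, hi⟩ => ⟨_, (s.equivFin.symm i).2, hi⟩,
    fun ⟨a, ha, hb⟩ => ⟨s.equivFin ⟨a, ha⟩, by simpa using hb⟩⟩

section TrailDecomposition

variable {V : Type*} [DecidableEq V]

section Boundary

variable [Fintype V]

lemma mem_graphBoundary {W : Finset (Sym2 V)} {v : V} :
    v ∈ graphBoundary W ↔ Odd #{e ∈ W | v ∈ e} := by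
  simp [graphBoundary]

lemma graphBoundary_union {A B : Finset (Sym2 V)} (h : Disjoint A B) :
    graphBoundary (A ∪ B) = symmDiff (graphBoundary A) (graphBoundary B) := by
  ext v
  rw [mem_symmDiff, mem_graphBoundary, mem_graphBoundary, mem_graphBoundary, filter_union,
    card_union_of_disjoint (disjoint_filter_filter h), Nat.odd_add']
  by_cases hB : Odd #{e ∈ B | v ∈ e} <;> simp [hB, ← Nat.not_odd_iff_even]

lemma graphBoundary_biUnion {ι : Type*} [DecidableEq ι] {s : Finset ι}
    {f : ι → Finset (Sym2 V)} (hf : (s : Set ι).PairwiseDisjoint f)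
    (hbd : (s : Set ι).PairwiseDisjoint fun i => graphBoundary (f i)) :
    graphBoundary (s.biUnion f) = s.biUnion fun i => graphBoundary (f i) := by
  induction s using Finset.induction_on with
  | empty => ext; simp [mem_graphBoundary]
  | insert i s hi ih =>
    rw [coe_insert, Set.pairwiseDisjoint_insert_of_notMem (mem_coe.not.mpr hi)] at hf hbd
    rw [biUnion_insert, biUnion_insert,
      graphBoundary_union ((disjoint_biUnion_right _ _ _).mpr hf.2), ih hf.1 hbd.1,
      ((disjoint_biUnion_right _ _ _).mpr hbd.2).symmDiff_eq_sup, sup_eq_union]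

lemma SimpleGraph.Walk.IsTrail.graphBoundary_edges {G : SimpleGraph V} {u v : V}
    {p : G.Walk u v} (hp : p.IsTrail) (huv : u ≠ v) :
    graphBoundary p.edges.toFinset = {u, v} := by
  ext x
  rw [mem_graphBoundary, hp.edges_nodup.card_eq_countP, ← Nat.not_even_iff_odd,
    hp.even_countP_edges_iff x]
  simp [huv]
  tauto

end Boundary

lemma SimpleGraph.Walk.isTrail_append_cons {G : SimpleGraph V} {a v u b : V} {q : G.Walk a v}
    {r : G.Walk u b} (hq : q.IsTrail) (hr : r.IsTrail) (h : G.Adj v u)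
    (hqe : s(v, u) ∉ q.edges) (hre : s(v, u) ∉ r.edges)
    (hqr : Disjoint q.edges.toFinset r.edges.toFinset) :
    (q.append (cons h r)).IsTrail := by
  rw [isTrail_append, isTrail_cons]
  refine ⟨hq, ⟨hr, hre⟩, ?_⟩
  intro e heq her
  rcases List.mem_cons.mp her with rfl | her
  · exact hqe heq
  · exact Finset.disjoint_left.mp hqr (List.mem_toFinset.mpr heq) (List.mem_toFinset.mpr her)

lemma SimpleGraph.not_isAcyclic_fromEdgeSet_insert {G : SimpleGraph V} {W : Finset (Sym2 V)}
    {u v : V} (huv : u ≠ v) (hW : s(v, u) ∉ W) (q : G.Walk u v)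
    (hq : ∀ e ∈ q.edges, e ∈ W) :
    ¬ (fromEdgeSet (↑(insert s(v, u) W) : Set (Sym2 V))).IsAcyclic := by
  set H := fromEdgeSet (↑(insert s(v, u) W) : Set (Sym2 V))
  intro hacyc
  have hadj : H.Adj u v := by simp [H, huv, Sym2.eq_swap]
  have hqH : ∀ e ∈ q.edges, e ∈ H.edgeSet := fun e he => by
    rw [edgeSet_fromEdgeSet]
    exact ⟨by simp [hq e he], G.not_isDiag_of_mem_edgeSet (q.edges_subset_edgeSet he)⟩
  have hbridge := isBridge_iff_forall_walk_mem_edges.mp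
    (isAcyclic_iff_forall_adj_isBridge.mp hacyc hadj) (q.transfer H hqH)
  rw [Walk.edges_transfer, Sym2.eq_swap] at hbridge
  exact hW (hq _ hbridge)

variable (G : SimpleGraph V)

abbrev TrailPiece := Σ p : V × V, G.Walk p.1 p.2

namespace TrailPiece

variable {G}

def ends (x : TrailPiece G) : Finset V := {x.1.1, x.1.2}

def edges (x : TrailPiece G) : Finset (Sym2 V) := x.2.edges.toFinset

lemma exists_walk_to {x : TrailPiece G} {v : V} (hv : v ∈ x.ends) (hx : x.2.IsTrail) :
    ∃ (a : V) (q : G.Walk a v), q.IsTrail ∧ x.ends = {a, v} ∧ q.edges.toFinset = x.edges := by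
  obtain ⟨⟨a, b⟩, p⟩ := x
  simp only [ends, mem_insert, mem_singleton] at hv
  rcases hv with rfl | rfl
  · exact ⟨b, p.reverse, hx.reverse, pair_comm _ _, by simp [edges]⟩
  · exact ⟨a, p, hx, rfl, rfl⟩

end TrailPiece

open TrailPiece

structure IsTrailDecomposition (W : Finset (Sym2 V)) (s : Finset (TrailPiece G)) : Prop where
  isTrail : ∀ x ∈ s, x.2.IsTrail
  fst_ne_snd : ∀ x ∈ s, x.1.1 ≠ x.1.2
  pairwiseDisjoint_ends : (s : Set (TrailPiece G)).PairwiseDisjoint ends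
  pairwiseDisjoint_edges : (s : Set (TrailPiece G)).PairwiseDisjoint edges
  biUnion_edges : s.biUnion edges = W

namespace IsTrailDecomposition

variable {G} {W : Finset (Sym2 V)} {s : Finset (TrailPiece G)}

lemma empty : IsTrailDecomposition G ∅ ∅ where
  isTrail := by simp
  fst_ne_snd := by simp
  pairwiseDisjoint_ends := by simp
  pairwiseDisjoint_edges := by simp
  biUnion_edges := by simp

lemma edges_subset (hs : IsTrailDecomposition G W s) {x : TrailPiece G} (hx : x ∈ s) :
    x.edges ⊆ W :=
  hs.biUnion_edges ▸ subset_biUnion_of_mem _ hx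

lemma notMem_ends (hs : IsTrailDecomposition G W s) {x y : TrailPiece G} (hx : x ∈ s)
    (hy : y ∈ s) (hxy : x ≠ y) {a : V} (ha : a ∈ x.ends) : a ∉ y.ends :=
  Finset.disjoint_left.mp (hs.pairwiseDisjoint_ends hx hy hxy) ha

lemma graphBoundary_eq [Fintype V] (hs : IsTrailDecomposition G W s) :
    graphBoundary W = s.biUnion ends := by
  have hbd : ∀ x ∈ s, graphBoundary x.edges = x.ends := fun x hx =>
    (hs.isTrail x hx).graphBoundary_edges (hs.fst_ne_snd x hx)
  have hbd_disjoint : (s : Set (TrailPiece G)).PairwiseDisjoint fun x => graphBoundary x.edges :=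
    fun x hx y hy hxy => by
      simpa only [Function.onFun, hbd x hx, hbd y hy] using hs.pairwiseDisjoint_ends hx hy hxy
  rw [← hs.biUnion_edges, graphBoundary_biUnion hs.pairwiseDisjoint_edges hbd_disjoint,
    biUnion_congr rfl hbd]

lemma card_biUnion_ends (hs : IsTrailDecomposition G W s) : #(s.biUnion ends) = 2 * #s := by
  rw [card_biUnion hs.pairwiseDisjoint_ends, sum_congr rfl fun x hx =>
    (card_pair (hs.fst_ne_snd x hx) : #x.ends = 2), sum_const, smul_eq_mul, mul_comm]

lemma replace (hs : IsTrailDecomposition G W s) {D : Finset (TrailPiece G)} (hD : D ⊆ s)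
    {e : Sym2 V} (he : e ∉ W) {z : TrailPiece G} (hz : z.2.IsTrail) (hzne : z.1.1 ≠ z.1.2)
    (hze : z.edges = insert e (D.biUnion edges))
    (hzends : ∀ y ∈ s \ D, Disjoint z.ends y.ends) :
    IsTrailDecomposition G (insert e W) (insert z (s \ D)) := by
  have hsub : s \ D ⊆ s := sdiff_subset
  refine ⟨?_, ?_, ?_, ?_, ?_⟩
  · simpa [hz] using fun x hx _ => hs.isTrail x hx
  · simpa [hzne] using fun x hx _ => hs.fst_ne_snd x hx
  · rw [coe_insert]
    exact (hs.pairwiseDisjoint_ends.subset (coe_subset.mpr hsub)).insert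
      fun y hy _ => hzends y hy
  · rw [coe_insert]
    refine (hs.pairwiseDisjoint_edges.subset (coe_subset.mpr hsub)).insert fun y hy _ => ?_
    obtain ⟨hys, hyD⟩ := mem_sdiff.mp hy
    rw [hze, disjoint_insert_left, disjoint_biUnion_left]
    exact ⟨fun hey => he (hs.edges_subset hys hey), fun x hx =>
      hs.pairwiseDisjoint_edges (hD hx) hys (ne_of_mem_of_not_mem hx hyD)⟩
  · rw [biUnion_insert, hze, insert_union, ← union_biUnion, union_sdiff_of_subset hD,
      hs.biUnion_edges]

lemma insert_join (hs : IsTrailDecomposition G W s) {v u : V} (h : G.Adj v u)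
    (hW : s(v, u) ∉ W) {D : Finset (TrailPiece G)} (hD : D ⊆ s) {a b : V} {q : G.Walk a v}
    {r : G.Walk u b} (hq : q.IsTrail) (hr : r.IsTrail)
    (hqr : Disjoint q.edges.toFinset r.edges.toFinset)
    (hDe : q.edges.toFinset ∪ r.edges.toFinset = D.biUnion edges) (hab : a ≠ b)
    (hends : ∀ y ∈ s \ D, a ∉ y.ends ∧ b ∉ y.ends) :
    IsTrailDecomposition G (insert s(v, u) W)
      (insert ⟨(a, b), q.append (.cons h r)⟩ (s \ D)) := by
  have hDW : D.biUnion edges ⊆ W := biUnion_subset.mpr fun x hx => hs.edges_subset (hD hx)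
  have hqW : s(v, u) ∉ q.edges := fun he =>
    hW (hDW (hDe ▸ mem_union_left _ (List.mem_toFinset.mpr he)))
  have hrW : s(v, u) ∉ r.edges := fun he =>
    hW (hDW (hDe ▸ mem_union_right _ (List.mem_toFinset.mpr he)))
  refine hs.replace hD hW (Walk.isTrail_append_cons hq hr h hqW hrW hqr) hab ?_ ?_
  · rw [← hDe]
    ext e
    simp [edges, Walk.edges_append]
  · intro y hy
    show Disjoint {a, b} y.ends
    simpa only [disjoint_insert_left, disjoint_singleton_left] using hends y hy

lemma exists_insert_edge (hs : IsTrailDecomposition G W s) {v u : V} (h : G.Adj v u)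
    (hW : s(v, u) ∉ W)
    (hacyc : (fromEdgeSet (↑(insert s(v, u) W) : Set (Sym2 V))).IsAcyclic) :
    ∃ s', IsTrailDecomposition G (insert s(v, u) W) s' := by
  by_cases hv : ∃ x ∈ s, v ∈ x.ends <;> by_cases hu : ∃ y ∈ s, u ∈ y.ends
  · obtain ⟨x, hx, hvx⟩ := hv
    obtain ⟨y, hy, huy⟩ := hu
    obtain ⟨a, q, hq, hxa, hqx⟩ := exists_walk_to hvx (hs.isTrail x hx)
    obtain ⟨b, r, hr, hyb, hry⟩ := exists_walk_to huy (hs.isTrail y hy)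
    have hxy : x ≠ y := by
      rintro rfl
      -- then `q` runs from `u` to `v` inside `W`, and `vu` closes a cycle
      obtain rfl : u = a := by simpa [hxa, h.ne'] using huy
      refine not_isAcyclic_fromEdgeSet_insert h.ne' hW q (fun e he => ?_) hacyc
      exact hs.edges_subset hx (hqx ▸ List.mem_toFinset.mpr he)
    have ha : a ∈ x.ends := by simp [hxa]
    have hb : b ∈ y.ends := by simp [hyb]
    refine ⟨_, hs.insert_join h hW (D := {x, y}) (by simp [insert_subset_iff, hx, hy]) hq
      hr.reverse ?_ ?_ (fun hab => hs.notMem_ends hx hy hxy ha (hab ▸ hb)) ?_⟩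
    · simpa [hqx, hry] using hs.pairwiseDisjoint_edges hx hy hxy
    · simp [hqx, hry]
    · intro z hz
      simp only [mem_sdiff, mem_insert, mem_singleton, not_or] at hz
      exact ⟨hs.notMem_ends hx hz.1 (Ne.symm hz.2.1) ha,
        hs.notMem_ends hy hz.1 (Ne.symm hz.2.2) hb⟩
  · obtain ⟨x, hx, hvx⟩ := hv
    push Not at hu
    obtain ⟨a, q, hq, hxa, hqx⟩ := exists_walk_to hvx (hs.isTrail x hx)
    have ha : a ∈ x.ends := by simp [hxa]
    refine ⟨_, hs.insert_join h hW (D := {x}) (singleton_subset_iff.mpr hx) hq (r := .nil)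
      .nil (by simp) (by simp [hqx]) (fun hau => hu x hx (hau ▸ ha)) fun y hy => ?_⟩
    rw [mem_sdiff, mem_singleton] at hy
    exact ⟨hs.notMem_ends hx hy.1 (Ne.symm hy.2) ha, hu y hy.1⟩
  · obtain ⟨y, hy, huy⟩ := hu
    push Not at hv
    obtain ⟨b, r, hr, hyb, hry⟩ := exists_walk_to huy (hs.isTrail y hy)
    have hb : b ∈ y.ends := by simp [hyb]
    refine ⟨_, hs.insert_join h hW (D := {y}) (singleton_subset_iff.mpr hy) (q := .nil)
      .nil hr.reverse (by simp) (by simp [hry]) (fun hvb => hv y hy (hvb ▸ hb)) fun z hz => ?_⟩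
    rw [mem_sdiff, mem_singleton] at hz
    exact ⟨hv z hz.1, hs.notMem_ends hy hz.1 (Ne.symm hz.2) hb⟩
  · push Not at hv hu
    refine ⟨_, hs.insert_join h hW (D := ∅) (empty_subset _) (q := .nil) (r := .nil) .nil .nil
      (by simp) (by simp) h.ne fun y hy => ?_⟩
    exact ⟨hv y (mem_sdiff.mp hy).1, hu y (mem_sdiff.mp hy).1⟩

end IsTrailDecomposition

theorem exists_isTrailDecomposition {W : Finset (Sym2 V)} (hWE : ∀ e ∈ W, e ∈ G.edgeSet)
    (hacyc : (fromEdgeSet (↑W : Set (Sym2 V))).IsAcyclic) :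
    ∃ s, IsTrailDecomposition G W s := by
  induction W using Finset.induction_on with
  | empty => exact ⟨∅, .empty⟩
  | insert e W he ih =>
    induction e using Sym2.ind with
    | _ v u =>
      obtain ⟨s, hs⟩ := ih (fun f hf => hWE f (mem_insert_of_mem hf))
        (hacyc.anti (fromEdgeSet_mono (by simp)))
      exact hs.exists_insert_edge (hWE _ (mem_insert_self _ _)) he hacyc

end TrailDecomposition

/-- Let `W` be an acyclic finset of edges of `G` with
`∂W = U` and `|U| = 2n`.  Then there are `n` pairs of vertices
`(v₁,u₁),…,(vₙ,uₙ)` whose union of endpoints is exactly `U`, and pairwise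
edge-disjoint trails `tᵢ` from `vᵢ` to `uᵢ` in `G`, whose edge finsets are
pairwise disjoint with union equal to `W`. -/
theorem stmt_7 {V : Type*} [Fintype V] [DecidableEq V] (G : SimpleGraph V)
    (W : Finset (Sym2 V)) (hWE : ∀ e ∈ W, e ∈ G.edgeSet)
    (hacyc : (SimpleGraph.fromEdgeSet (↑W : Set (Sym2 V))).IsAcyclic)
    (U : Finset V) (n : ℕ) (hbd : graphBoundary W = U) (hU : U.card = 2 * n) :
    ∃ (p : Fin n → V × V) (t : (i : Fin n) → G.Walk (p i).1 (p i).2),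
      (∀ i, (t i).IsTrail) ∧
      Finset.univ.biUnion (fun i => ({(p i).1, (p i).2} : Finset V)) = U ∧
      (∀ i j, i ≠ j → Disjoint (t i).edges.toFinset (t j).edges.toFinset) ∧
      Finset.univ.biUnion (fun i => (t i).edges.toFinset) = W := by
  obtain ⟨s, hs⟩ := exists_isTrailDecomposition G hWE hacyc
  have hends : s.biUnion TrailPiece.ends = U := hs.graphBoundary_eq ▸ hbd
  obtain rfl : #s = n := by
    have := hs.card_biUnion_ends
    rw [hends] at this
    omega
  refine ⟨fun i => (s.equivFin.symm i).1.1, fun i => (s.equivFin.symm i).1.2,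
    fun i => hs.isTrail _ (s.equivFin.symm i).2, ?_, fun i j hij => ?_, ?_⟩
  · rw [← hends]
    exact biUnion_univ_equivFin_symm s TrailPiece.ends
  · refine hs.pairwiseDisjoint_edges (s.equivFin.symm i).2 (s.equivFin.symm j).2 ?_
    simpa [Subtype.val_inj] using hij
  · rw [← hs.biUnion_edges]
    exact biUnion_univ_equivFin_symm s TrailPiece.edges
end

section
/- Fix d ≥ 1 and a finite vertex type V. Let K be a finset of d-simplices with strictly positive real weights, let U be a nonempty finset of (d−1)-simplices, and let W ⊆ K satisfy ∂W = U with w(W) minimal among all finsets W' ⊆ K with ∂W' = U. Let f be any function assigning to every nonempty finset X of (d−1)-simplices an element f(X) ∈ X. Then there is an enumeration σ₁,…,σₖ of the elements of W such that, setting U₀ = U and Uᵢ = U_{i−1} △ ∂{σᵢ} for 1 ≤ i ≤ k, one has: Uᵢ ≠ ∅ for all i < k, Uₖ = ∅, and f(U_{i−1}) ⊂ σᵢ for each 1 ≤ i ≤ k. -/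
/-!
A minimum-weight chain `W` with positive weights contains no nonempty cycle `Z ⊆ W`: removing it
would keep the boundary, since `∂(W \ Z) = ∂W △ ∂Z`, and lower the weight. For a nonempty
cycle-free chain `W` of `d`-simplices, `ρ = f(∂W)` lies in an odd, hence positive, number of
`σ ∈ W`, each a proper coface of `ρ` by cardinality. Then `W.erase σ` is cycle-free with boundary
`∂W △ ∂{σ}`, and the enumeration is built by recursion on `#W`.
-/

/-- The boundary of a finset `W` of simplices over vertex type `V`:
the finsets of `V` of cardinality `k` that are subsets of an odd number of
members of `W`.  (For a finset of `d`-simplices, i.e. finsets of cardinality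
`d+1`, the boundary consists of `(d-1)`-simplices, obtained with `k = d`.) -/
def simpBoundary (V : Type*) [Fintype V] [DecidableEq V] (k : ℕ)
    (W : Finset (Finset V)) : Finset (Finset V) :=
  ((Finset.univ : Finset V).powersetCard k).filter
    fun ρ => Odd ((W.filter fun σ => ρ ⊆ σ).card)

open Finset
open scoped symmDiff

theorem Finset.card_symmDiff_add_two_mul_card_inter {α : Type*} [DecidableEq α]
    (s t : Finset α) : #(s ∆ t) + 2 * #(s ∩ t) = #s + #t := by
  rw [Finset.symmDiff_def, card_union_of_disjoint disjoint_sdiff_sdiff]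
  have := card_sdiff_add_card_inter s t
  have := card_sdiff_add_card_inter t s
  rw [inter_comm] at this
  omega

section Boundary

variable {V : Type*} [Fintype V] [DecidableEq V] {d : ℕ}

theorem mem_simpBoundary {W : Finset (Finset V)} {ρ : Finset V} :
    ρ ∈ simpBoundary V d W ↔ #ρ = d ∧ Odd #{σ ∈ W | ρ ⊆ σ} := by
  simp [simpBoundary]

@[simp]
theorem simpBoundary_empty : simpBoundary V d ∅ = ∅ := by
  simp [simpBoundary]

theorem simpBoundary_symmDiff (A B : Finset (Finset V)) :
    simpBoundary V d (A ∆ B) = simpBoundary V d A ∆ simpBoundary V d B := by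
  ext ρ
  have hfilter : {σ ∈ A ∆ B | ρ ⊆ σ} = {σ ∈ A | ρ ⊆ σ} ∆ {σ ∈ B | ρ ⊆ σ} := by
    ext σ
    simp only [mem_filter, mem_symmDiff]
    tauto
  have hcard := card_symmDiff_add_two_mul_card_inter {σ ∈ A | ρ ⊆ σ} {σ ∈ B | ρ ⊆ σ}
  rw [mem_symmDiff, mem_simpBoundary, mem_simpBoundary, mem_simpBoundary, hfilter]
  simp only [Nat.odd_iff]
  omega

theorem exists_mem_superset_of_mem_simpBoundary {W : Finset (Finset V)} {ρ : Finset V}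
    (hρ : ρ ∈ simpBoundary V d W) : ∃ σ ∈ W, ρ ⊆ σ := by
  obtain ⟨σ, hσ⟩ := card_pos.1 (mem_simpBoundary.1 hρ).2.pos
  exact ⟨σ, mem_filter.1 hσ⟩

theorem simpBoundary_erase {W : Finset (Finset V)} {σ : Finset V} (hσ : σ ∈ W) :
    simpBoundary V d (W.erase σ) = simpBoundary V d W ∆ simpBoundary V d {σ} := by
  rw [← simpBoundary_symmDiff, symmDiff_of_ge (singleton_subset_iff.2 hσ),
    sdiff_singleton_eq_erase]

def IsCycleFree (d : ℕ) (W : Finset (Finset V)) : Prop :=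
  ∀ Z ⊆ W, Z ≠ ∅ → simpBoundary V d Z ≠ ∅

theorem IsCycleFree.mono {W W' : Finset (Finset V)} (hW : IsCycleFree d W) (h : W' ⊆ W) :
    IsCycleFree d W' :=
  fun Z hZ => hW Z (hZ.trans h)

theorem isCycleFree_of_forall_sum_le {K W : Finset (Finset V)} {w : Finset V → ℝ}
    (hWK : W ⊆ K) (hw : ∀ σ ∈ W, 0 < w σ)
    (hmin : ∀ W' ⊆ K, simpBoundary V d W' = simpBoundary V d W →
      ∑ σ ∈ W, w σ ≤ ∑ σ ∈ W', w σ) :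
    IsCycleFree d W := by
  intro Z hZW hZ hcycle
  have hbd : simpBoundary V d (W \ Z) = simpBoundary V d W := by
    rw [← symmDiff_of_ge hZW, simpBoundary_symmDiff, hcycle]
    exact symmDiff_bot _
  have hle := hmin (W \ Z) (sdiff_subset.trans hWK) hbd
  have hsplit := sum_sdiff hZW (f := w)
  have hpos : 0 < ∑ σ ∈ Z, w σ :=
    sum_pos (fun σ hσ => hw σ (hZW hσ)) (nonempty_iff_ne_empty.2 hZ)
  linarith

/-- `(l.take i).foldl … U` is the chain `U_i` of the statement. -/
def IsPeeling (d : ℕ) (f : Finset (Finset V) → Finset V) (U : Finset (Finset V))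
    (l : List (Finset V)) : Prop :=
  (∀ i, i < l.length →
    (l.take i).foldl (fun X σ => symmDiff X (simpBoundary V d {σ})) U ≠ ∅) ∧
  l.foldl (fun X σ => symmDiff X (simpBoundary V d {σ})) U = ∅ ∧
  ∀ (i : ℕ) (h : i < l.length),
    f ((l.take i).foldl (fun X σ => symmDiff X (simpBoundary V d {σ})) U) ⊂ l.get ⟨i, h⟩

theorem isPeeling_nil (f : Finset (Finset V) → Finset V) : IsPeeling d f ∅ [] := by
  simp [IsPeeling]

theorem IsPeeling.cons {f : Finset (Finset V) → Finset V} {U : Finset (Finset V)}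
    {σ : Finset V} {l : List (Finset V)} (hl : IsPeeling d f (U ∆ simpBoundary V d {σ}) l)
    (hU : U ≠ ∅) (hσ : f U ⊂ σ) : IsPeeling d f U (σ :: l) := by
  obtain ⟨hne, hend, hcoface⟩ := hl
  refine ⟨fun i hi => ?_, hend, fun i hi => ?_⟩
  · cases i with
    | zero => exact hU
    | succ i => exact hne i (Nat.lt_of_succ_lt_succ hi)
  · cases i with
    | zero => exact hσ
    | succ i => exact hcoface i (Nat.lt_of_succ_lt_succ hi)

theorem exists_isPeeling_of_isCycleFree {f : Finset (Finset V) → Finset V}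
    (hf : ∀ X : Finset (Finset V), X ≠ ∅ → (∀ ρ ∈ X, ρ.card = d) → f X ∈ X)
    {W : Finset (Finset V)} (hWd : ∀ σ ∈ W, #σ = d + 1) (hW : IsCycleFree d W) :
    ∃ l : List (Finset V), l.Nodup ∧ l.toFinset = W ∧ IsPeeling d f (simpBoundary V d W) l := by
  rcases eq_or_ne W ∅ with rfl | hWne
  · exact ⟨[], List.nodup_nil, rfl, by simpa using isPeeling_nil f⟩
  have hU : simpBoundary V d W ≠ ∅ := hW W subset_rfl hWne
  have hfU := hf _ hU fun ρ hρ => (mem_simpBoundary.1 hρ).1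
  obtain ⟨σ, hσW, hfσ⟩ := exists_mem_superset_of_mem_simpBoundary hfU
  have hcoface : f (simpBoundary V d W) ⊂ σ :=
    ssubset_of_subset_of_ne hfσ fun h => by
      have := hWd σ hσW
      rw [← h, (mem_simpBoundary.1 hfU).1] at this
      omega
  obtain ⟨l, hnodup, hl, hpeel⟩ := exists_isPeeling_of_isCycleFree hf
    (fun τ hτ => hWd τ (mem_of_mem_erase hτ)) (hW.mono (erase_subset σ W))
  refine ⟨σ :: l, List.nodup_cons.2 ⟨fun h => ?_, hnodup⟩, ?_, ?_⟩
  · exact notMem_erase σ W (hl ▸ List.mem_toFinset.2 h)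
  · rw [List.toFinset_cons, hl, insert_erase hσW]
  · exact (simpBoundary_erase hσW ▸ hpeel).cons hU hcoface
termination_by #W
decreasing_by exact card_erase_lt_of_mem hσW

end Boundary

theorem stmt_13_general (d : ℕ) (V : Type*) [Fintype V] [DecidableEq V]
    (K : Finset (Finset V)) (hK : ∀ σ ∈ K, σ.card = d + 1)
    (w : Finset V → ℝ) (hw : ∀ σ ∈ K, 0 < w σ)
    (U : Finset (Finset V))
    (W : Finset (Finset V)) (hWK : W ⊆ K) (hbd : simpBoundary V d W = U)
    (hmin : ∀ W' ⊆ K, simpBoundary V d W' = U → ∑ σ ∈ W, w σ ≤ ∑ σ ∈ W', w σ)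
    (f : Finset (Finset V) → Finset V)
    (hf : ∀ X : Finset (Finset V), X ≠ ∅ → (∀ ρ ∈ X, ρ.card = d) → f X ∈ X) :
    ∃ l : List (Finset V), l.Nodup ∧ l.toFinset = W ∧
      (∀ i, i < l.length →
        (l.take i).foldl (fun X σ => symmDiff X (simpBoundary V d {σ})) U ≠ ∅) ∧
      l.foldl (fun X σ => symmDiff X (simpBoundary V d {σ})) U = ∅ ∧
      ∀ (i : ℕ) (h : i < l.length),
        f ((l.take i).foldl (fun X σ => symmDiff X (simpBoundary V d {σ})) U)
          ⊂ l.get ⟨i, h⟩ := by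
  subst hbd
  have hcycleFree : IsCycleFree d W :=
    isCycleFree_of_forall_sum_le hWK (fun σ hσ => hw σ (hWK hσ)) hmin
  exact exists_isPeeling_of_isCycleFree hf (fun σ hσ => hK σ (hWK hσ)) hcycleFree

/-- Let `K` be a finset of `d`-simplices with strictly
positive weights, `U` a nonempty finset of `(d-1)`-simplices, and `W ⊆ K` a
minimum-weight bounding chain of `U`.  For any choice function `f` picking an
element of every nonempty finset of `(d-1)`-simplices, there is an
enumeration `σ₁,…,σₖ` of `W` such that, with `U₀ = U` and
`Uᵢ = U_{i-1} △ ∂{σᵢ}`, one has `Uᵢ ≠ ∅` for `i < k`, `Uₖ = ∅`, and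
`f(U_{i-1}) ⊂ σᵢ` for each `1 ≤ i ≤ k`. -/
theorem stmt_13 (d : ℕ) (hd : 1 ≤ d) (V : Type*) [Fintype V] [DecidableEq V]
    (K : Finset (Finset V)) (hK : ∀ σ ∈ K, σ.card = d + 1)
    (w : Finset V → ℝ) (hw : ∀ σ ∈ K, 0 < w σ)
    (U : Finset (Finset V)) (hUd : ∀ ρ ∈ U, ρ.card = d) (hUne : U ≠ ∅)
    (W : Finset (Finset V)) (hWK : W ⊆ K) (hbd : simpBoundary V d W = U)
    (hmin : ∀ W' ⊆ K, simpBoundary V d W' = U → ∑ σ ∈ W, w σ ≤ ∑ σ ∈ W', w σ)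
    (f : Finset (Finset V) → Finset V)
    (hf : ∀ X : Finset (Finset V), X ≠ ∅ → (∀ ρ ∈ X, ρ.card = d) → f X ∈ X) :
    ∃ l : List (Finset V), l.Nodup ∧ l.toFinset = W ∧
      (∀ i, i < l.length →
        (l.take i).foldl (fun X σ => symmDiff X (simpBoundary V d {σ})) U ≠ ∅) ∧
      l.foldl (fun X σ => symmDiff X (simpBoundary V d {σ})) U = ∅ ∧
      ∀ (i : ℕ) (h : i < l.length),
        f ((l.take i).foldl (fun X σ => symmDiff X (simpBoundary V d {σ})) U)
          ⊂ l.get ⟨i, h⟩ :=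
  stmt_13_general d V K hK w hw U W hWK hbd hmin f hf
end

section
/- Let G be a finite simple graph, let α ≥ 1, and let V₁,…,V_α be a partition of the vertices of G. Define a graph H whose vertices are pairs (i, γ) where 1 ≤ i ≤ α and γ : Vᵢ → Fin 3 is a proper 3-coloring of the subgraph of G induced on Vᵢ, with an edge between (i, γ) and (i', γ') exactly when i ≠ i' and the combined function on Vᵢ ∪ V_{i'} given by γ and γ' is a proper 3-coloring of the subgraph of G induced on Vᵢ ∪ V_{i'}. Then G admits a proper 3-coloring if and only if H contains a clique with exactly one vertex (i, γᵢ) for each index 1 ≤ i ≤ α. -/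
/-! A global 3-coloring restricts to a proper coloring of every part, and these restrictions are
pairwise compatible, i.e. adjacent in `H`. Conversely, the colorings `γᵢ` of a clique glue to a
coloring of `G`: an edge inside one part is handled by the properness of that `γᵢ`, an edge
between two parts by the adjacency of the corresponding clique vertices. -/

/-- `γ : {x // x ∈ A} → Fin 3` is a proper 3-coloring of the subgraph of `G`
induced on the finset `A`. -/
def ProperOnSub {W : Type*} (G : SimpleGraph W) (A : Finset W)
    (γ : {x : W // x ∈ A} → Fin 3) : Prop :=
  ∀ x y : {x : W // x ∈ A}, G.Adj x.1 y.1 → γ x ≠ γ y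

/-- A (total) function `κ : W → Fin 3` is a proper 3-coloring of the subgraph
of `G` induced on the finset `A`. -/
def ProperOnTot {W : Type*} (G : SimpleGraph W) (A : Finset W)
    (κ : W → Fin 3) : Prop :=
  ∀ x ∈ A, ∀ y ∈ A, G.Adj x y → κ x ≠ κ y

/-- The vertices of the graph `H`: pairs `(i, γ)` where `γ` is a proper
3-coloring of the subgraph of `G` induced on `V i`. -/
def CliqueVert {W : Type*} (G : SimpleGraph W) {α : ℕ}
    (V : Fin α → Finset W) : Type _ :=
  Σ i : Fin α, {γ : {x : W // x ∈ V i} → Fin 3 // ProperOnSub G (V i) γ}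

/-- The graph `H`: `(i, γ)` and `(i', γ')` are adjacent exactly when `i ≠ i'`
and the combined function on `V i ∪ V i'` given by `γ` and `γ'` (i.e. any
common extension `κ` of `γ` and `γ'`) is a proper 3-coloring of the subgraph
of `G` induced on `V i ∪ V i'`. -/
def CliqueGraph {W : Type*} [DecidableEq W] (G : SimpleGraph W) {α : ℕ}
    (V : Fin α → Finset W) : SimpleGraph (CliqueVert G V) where
  Adj a b := a.1 ≠ b.1 ∧ ∃ κ : W → Fin 3,
      (∀ x (hx : x ∈ V a.1), κ x = a.2.1 ⟨x, hx⟩) ∧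
      (∀ x (hx : x ∈ V b.1), κ x = b.2.1 ⟨x, hx⟩) ∧
      ProperOnTot G (V a.1 ∪ V b.1) κ
  symm := ⟨by
    rintro a b ⟨hne, κ, h1, h2, h3⟩
    exact ⟨hne.symm, κ, h2, h1, by rwa [Finset.union_comm]⟩⟩
  loopless := ⟨by rintro a ⟨hne, -⟩; exact hne rfl⟩

namespace CliqueGraph

variable {W : Type*} [DecidableEq W] {G : SimpleGraph W} {α : ℕ} {V : Fin α → Finset W}

def restrictColoring (C : G.Coloring (Fin 3)) (i : Fin α) :
    {γ : {x : W // x ∈ V i} → Fin 3 // ProperOnSub G (V i) γ} :=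
  ⟨fun x => C x.1, fun _ _ h => C.valid h⟩

theorem isClique_range_restrictColoring (C : G.Coloring (Fin 3)) :
    (CliqueGraph G V).IsClique
      (Set.range fun i => (⟨i, restrictColoring C i⟩ : CliqueVert G V)) := by
  rintro _ ⟨i, rfl⟩ _ ⟨j, rfl⟩ hne
  refine ⟨fun hij => hne ?_, C, fun _ _ => rfl, fun _ _ => rfl, fun _ _ _ _ h => C.valid h⟩
  cases hij
  rfl

theorem ne_of_isClique_range
    {c : (i : Fin α) → {γ : {x : W // x ∈ V i} → Fin 3 // ProperOnSub G (V i) γ}}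
    (hc : (CliqueGraph G V).IsClique (Set.range fun i => (⟨i, c i⟩ : CliqueVert G V)))
    {i j : Fin α} {x y : W} (hx : x ∈ V i) (hy : y ∈ V j) (hxy : G.Adj x y) :
    (c i).1 ⟨x, hx⟩ ≠ (c j).1 ⟨y, hy⟩ := by
  obtain rfl | hij := eq_or_ne i j
  · exact (c i).2 _ _ hxy
  · obtain ⟨-, κ, hκi, hκj, hκ⟩ :=
      hc ⟨i, rfl⟩ ⟨j, rfl⟩ fun h => hij (congrArg Sigma.fst h)
    rw [← hκi x hx, ← hκj y hy]
    exact hκ x (Finset.mem_union_left _ hx) y (Finset.mem_union_right _ hy) hxy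

theorem colorable_of_isClique_range
    {c : (i : Fin α) → {γ : {x : W // x ∈ V i} → Fin 3 // ProperOnSub G (V i) γ}}
    (hc : (CliqueGraph G V).IsClique (Set.range fun i => (⟨i, c i⟩ : CliqueVert G V)))
    (hcover : ∀ x, ∃ i, x ∈ V i) : G.Colorable 3 := by
  choose part hpart using hcover
  exact ⟨.mk (fun x => (c (part x)).1 ⟨x, hpart x⟩)
    fun hxy => ne_of_isClique_range hc (hpart _) (hpart _) hxy⟩

end CliqueGraph

theorem stmt_15_general {W : Type*} [Fintype W] [DecidableEq W] (G : SimpleGraph W)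
    (α : ℕ) (V : Fin α → Finset W)
    (hcover : Finset.univ.biUnion V = (Finset.univ : Finset W)) :
    G.Colorable 3 ↔
      ∃ c : (i : Fin α) → {γ : {x : W // x ∈ V i} → Fin 3 // ProperOnSub G (V i) γ},
        (CliqueGraph G V).IsClique
          (Set.range fun i => (⟨i, c i⟩ : CliqueVert G V)) := by
  have hmem : ∀ x, ∃ i, x ∈ V i := by
    simpa using Finset.eq_univ_iff_forall.mp hcover
  exact ⟨fun ⟨C⟩ => ⟨_, CliqueGraph.isClique_range_restrictColoring C⟩,
    fun ⟨_, hc⟩ => CliqueGraph.colorable_of_isClique_range hc hmem⟩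

/-- Let `G` be a finite simple graph, `α ≥ 1`, and
`V₁,…,V_α` a partition of the vertices of `G`.  Then `G` admits a proper
3-coloring iff the graph `H` (= `CliqueGraph G V`) contains a clique with
exactly one vertex `(i, γᵢ)` for each index `i`. -/
theorem stmt_15 {W : Type*} [Fintype W] [DecidableEq W] (G : SimpleGraph W)
    (α : ℕ) (hα : 1 ≤ α) (V : Fin α → Finset W)
    (hdisj : ∀ i j : Fin α, i ≠ j → Disjoint (V i) (V j))
    (hcover : Finset.univ.biUnion V = (Finset.univ : Finset W)) :
    G.Colorable 3 ↔
      ∃ c : (i : Fin α) → {γ : {x : W // x ∈ V i} → Fin 3 // ProperOnSub G (V i) γ},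
        (CliqueGraph G V).IsClique
          (Set.range fun i => (⟨i, c i⟩ : CliqueVert G V)) :=
  stmt_15_general G α V hcover
end
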